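/- arXiv:1404.4279 — 5 statements merged into one kernel-verified Lean document; each statement's English description precedes it below -/
import Mathlib

section
/- Let S = ⊕_{k≥0} S_k be a commutative graded ring generated as a ring by S_0 and S_1, and let M = ⊕_{k≥0} M_k be a graded S-module such that each M_k is finitely generated as an S_0-module. Then M is finitely generated as an S-module if and only if the S-grading on M is simple, i.e., if and only if there exists an index k₀ such that S_1 · M_k = M_{k+1} for all k ≥ k₀. -/
/-- For an additive subgroup `A` of scalars and a set `T` of module elements,
`grSMul A T` is the additive subgroup generated by all products `a • t`
with `a ∈ A` and `t ∈ T`.  When `A` contains `1` (e.g. `A = S₀`) and is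
closed under multiplication, this is the `A`-submodule generated by `T`. -/
def grSMul {S M : Type*} [CommRing S] [AddCommGroup M] [Module S M]
    (A : AddSubgroup S) (T : Set M) : AddSubgroup M :=
  AddSubgroup.closure {x | ∃ a ∈ A, ∃ t ∈ T, x = a • t}

/-! If `M` is generated by finitely many elements, they may be taken homogeneous of
degree `≤ k₀`. For `k ≥ k₀` the degree `k + 1` part of `s • g`, with `g` such a generator of
degree `d`, is `s_{k+1-d} • g`; as `S` is generated by `S₀` and `S₁` we have `S_{i+1} = S₁ S_i`,
so this lies in `S₁ M_k`. Conversely, if `S₁ M_k = M_{k+1}` for `k ≥ k₀`, then finite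
`S₀`-generating sets of `M_0, …, M_{k₀}` together generate `M`. -/

open DirectSum

section grSMul

variable {S M : Type*} [CommRing S] [AddCommGroup M] [Module S M] {A : AddSubgroup S}

theorem grSMul_le_iff {T : Set M} {H : AddSubgroup M} :
    grSMul A T ≤ H ↔ ∀ a ∈ A, ∀ t ∈ T, a • t ∈ H := by
  simp only [grSMul, AddSubgroup.closure_le, Set.ofPred_subset, SetLike.mem_coe]
  constructor
  · exact fun h a ha t ht => h _ ⟨a, ha, t, ht, rfl⟩
  · rintro h _ ⟨a, ha, t, ht, rfl⟩
    exact h a ha t ht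

theorem smul_mem_grSMul {T : Set M} {a : S} {t : M} (ha : a ∈ A) (ht : t ∈ T) :
    a • t ∈ grSMul A T :=
  grSMul_le_iff.1 le_rfl a ha t ht

theorem grSMul_le_toAddSubgroup {T : Set M} {N : Submodule S M} (hT : T ⊆ N) :
    grSMul A T ≤ N.toAddSubgroup :=
  grSMul_le_iff.2 fun a _ _ ht => N.smul_mem a (hT ht)

theorem smul_mem_grSMul_of_smul_mem {T T' : Set M} {b : S} {x : M} (hx : x ∈ grSMul A T)
    (hb : ∀ t ∈ T, b • t ∈ T') : b • x ∈ grSMul A T' := by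
  have : grSMul A T ≤ (grSMul A T').comap (DistribSMul.toAddMonoidHom M b) :=
    grSMul_le_iff.2 fun a ha t ht => by
      simpa [smul_comm b a t] using smul_mem_grSMul ha (hb t ht)
  exact this hx

theorem smul_mem_grSMul_of_mem_grSMul {T : Set S} {T' : Set M} {a : S} {x : M}
    (ha : a ∈ grSMul A T) (hT : ∀ t ∈ T, t • x ∈ T') : a • x ∈ grSMul A T' := by
  have : grSMul A T ≤ (grSMul A T').comap (LinearMap.toSpanSingleton S M x).toAddMonoidHom :=
    grSMul_le_iff.2 fun b hb t ht => by
      simpa [mul_smul] using smul_mem_grSMul hb (hT t ht)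
  exact this ha

end grSMul

theorem DirectSum.coe_decompose_smul_add_of_right_mem {ι S M σ τ : Type*} [DecidableEq ι]
    [AddRightCancelMonoid ι] [Semiring S] [SetLike σ S] [AddSubmonoidClass σ S] (𝒜 : ι → σ)
    [GradedRing 𝒜] [AddCommMonoid M] [Module S M] [SetLike τ M] [AddSubmonoidClass τ M]
    (ℳ : ι → τ) [SetLike.GradedSMul 𝒜 ℳ] [Decomposition ℳ] {s : S} {x : M} {i j : ι}
    (hx : x ∈ ℳ j) : (decompose ℳ (s • x) (i + j) : M) = (decompose 𝒜 s i : S) • x := by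
  classical
  have hmem (k : ι) : (decompose 𝒜 s k : S) • x ∈ ℳ (k + j) :=
    SetLike.GradedSMul.smul_mem (decompose 𝒜 s k).2 hx
  conv_lhs => rw [← sum_support_decompose 𝒜 s, Finset.sum_smul]
  rw [decompose_sum, DFinsupp.finsetSum_apply, AddSubmonoidClass.coe_finsetSum,
    Finset.sum_eq_single i]
  · exact decompose_of_mem_same ℳ (hmem i)
  · intro k _ hki
    exact decompose_of_mem_ne ℳ (hmem k) (fun h => hki (add_right_cancel h))
  · intro hi
    rw [DFinsupp.notMem_support_iff.mp hi]
    simp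

section Graded

variable {S M : Type*} [CommRing S] [AddCommGroup M] [Module S M]
  {𝒜 : ℕ → AddSubgroup S} {ℳ : ℕ → AddSubgroup M}

theorem grSMul_graded_le [SetLike.GradedSMul 𝒜 ℳ] (i j : ℕ) :
    grSMul (𝒜 i) (ℳ j : Set M) ≤ ℳ (i + j) :=
  grSMul_le_iff.2 fun _ ha _ ht => SetLike.GradedSMul.smul_mem ha ht

theorem smul_mem_grSMul_graded [SetLike.GradedSMul 𝒜 ℳ] {A : AddSubgroup S} {i j : ℕ} {b : S}
    {x : M} (hb : b ∈ 𝒜 j) (hx : x ∈ grSMul A (ℳ i : Set M)) :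
    b • x ∈ grSMul A (ℳ (j + i) : Set M) :=
  smul_mem_grSMul_of_smul_mem hx fun _ ht => SetLike.GradedSMul.smul_mem hb ht

theorem mem_grSMul_one_of_mem_succ [GradedRing 𝒜]
    (hgen : Subring.closure ((𝒜 0 : Set S) ∪ (𝒜 1 : Set S)) = ⊤) {n : ℕ} {a : S}
    (ha : a ∈ 𝒜 (n + 1)) : a ∈ grSMul (𝒜 1) (𝒜 n : Set S) := by
  classical
  suffices h : ∀ s : S, ∀ n, (decompose 𝒜 s (n + 1) : S) ∈ grSMul (𝒜 1) (𝒜 n : Set S) by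
    simpa [decompose_of_mem_same 𝒜 ha] using h a n
  have h₀ {x : S} (hx : x ∈ 𝒜 0) (n : ℕ) :
      (decompose 𝒜 x (n + 1) : S) ∈ grSMul (𝒜 1) (𝒜 n : Set S) := by
    rw [decompose_of_mem_ne 𝒜 hx n.succ_ne_zero.symm]
    exact zero_mem _
  intro s
  induction (hgen ▸ Subring.mem_top s : s ∈ Subring.closure _)
    using Subring.closure_induction with
  | mem x hx =>
    intro n
    rcases hx with hx | hx
    · exact h₀ hx n
    · rcases eq_or_ne n 0 with rfl | hn
      · rw [decompose_of_mem_same 𝒜 hx]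
        simpa using smul_mem_grSMul (T := (𝒜 0 : Set S)) hx (SetLike.one_mem_graded 𝒜)
      · rw [decompose_of_mem_ne 𝒜 hx (by omega)]
        exact zero_mem _
  | zero => simp
  | one => exact h₀ (SetLike.one_mem_graded 𝒜)
  | add x y _ _ hx hy => intro n; simpa using add_mem (hx n) (hy n)
  | neg x _ hx => intro n; rw [decompose_neg]; exact neg_mem (hx n)
  | mul x y _ _ hx hy =>
    intro n
    rw [decompose_mul, coe_mul_apply]
    refine sum_mem fun ij hij => ?_
    obtain ⟨i, j⟩ := ij
    have hij : i + j = n + 1 := (Finset.mem_filter.1 hij).2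
    rcases i with _ | i
    · obtain rfl : j = n + 1 := by omega
      simpa using smul_mem_grSMul_graded (decompose 𝒜 x 0).2 (hy n)
    · obtain rfl : n = j + i := by omega
      simpa [mul_comm] using smul_mem_grSMul_graded (decompose 𝒜 y j).2 (hx i)

theorem smul_mem_grSMul_one_of_mem_succ [GradedRing 𝒜] [SetLike.GradedSMul 𝒜 ℳ]
    (hgen : Subring.closure ((𝒜 0 : Set S) ∪ (𝒜 1 : Set S)) = ⊤) {i d : ℕ} {a : S} {x : M}
    (ha : a ∈ 𝒜 (i + 1)) (hx : x ∈ ℳ d) : a • x ∈ grSMul (𝒜 1) (ℳ (i + d) : Set M) :=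
  smul_mem_grSMul_of_mem_grSMul (mem_grSMul_one_of_mem_succ hgen ha) fun _ ht =>
    SetLike.GradedSMul.smul_mem ht hx

theorem Module.Finite.exists_span_graded_le_eq_top [Decomposition ℳ] [Module.Finite S M] :
    ∃ k₀ : ℕ, Submodule.span S {m : M | ∃ d ≤ k₀, m ∈ ℳ d} = ⊤ := by
  classical
  obtain ⟨F, hF⟩ := Module.Finite.fg_top (R := S) (M := M)
  refine ⟨F.sup fun g => (decompose ℳ g).support.sup id, eq_top_iff.2 ?_⟩
  rw [← hF, Submodule.span_le]
  intro g hg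
  rw [← sum_support_decompose ℳ g]
  refine sum_mem fun d hd => Submodule.subset_span ⟨d, ?_, SetLike.coe_mem _⟩
  exact (Finset.le_sup (f := id) hd).trans
    (Finset.le_sup (f := fun g => (decompose ℳ g).support.sup id) hg)

theorem grSMul_one_eq_of_span_eq_top [GradedRing 𝒜] [SetLike.GradedSMul 𝒜 ℳ] [Decomposition ℳ]
    (hgen : Subring.closure ((𝒜 0 : Set S) ∪ (𝒜 1 : Set S)) = ⊤) {k₀ k : ℕ}
    (hspan : Submodule.span S {m : M | ∃ d ≤ k₀, m ∈ ℳ d} = ⊤) (hk : k₀ ≤ k) :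
    grSMul (𝒜 1) (ℳ k : Set M) = ℳ (k + 1) := by
  refine le_antisymm (add_comm 1 k ▸ grSMul_graded_le 1 k) fun m hm => ?_
  -- quantifying over `s` makes the statement stable under the scalar multiplications of the span
  have key : ∀ g ∈ Submodule.span S {m : M | ∃ d ≤ k₀, m ∈ ℳ d}, ∀ s : S,
      (decompose ℳ (s • g) (k + 1) : M) ∈ grSMul (𝒜 1) (ℳ k : Set M) := by
    intro g hg
    induction hg using Submodule.span_induction with
    | mem g hg =>
      obtain ⟨d, hd, hg⟩ := hg
      intro s
      obtain ⟨i, rfl⟩ : ∃ i, k = i + d := ⟨k - d, by omega⟩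
      rw [show i + d + 1 = i + 1 + d by omega, coe_decompose_smul_add_of_right_mem 𝒜 ℳ hg]
      exact smul_mem_grSMul_one_of_mem_succ hgen (decompose 𝒜 s (i + 1)).2 hg
    | zero => simp
    | add x y _ _ hx hy => intro s; simpa [smul_add] using add_mem (hx s) (hy s)
    | smul a x _ hx => intro s; simpa [smul_smul] using hx (s * a)
  simpa [decompose_of_mem_same ℳ hm] using key m (hspan ▸ Submodule.mem_top) 1

theorem fg_span_of_grSMul_eq {A : AddSubgroup S} {T : Finset M} {H : AddSubgroup M}
    (hT : (T : Set M) ⊆ H) (h : grSMul A T = H) : (Submodule.span S (H : Set M)).FG :=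
  ⟨T, le_antisymm (Submodule.span_mono hT)
    (Submodule.span_le.2 fun _ hx => grSMul_le_toAddSubgroup Submodule.subset_span (h ▸ hx))⟩

theorem Module.finite_of_le_grSMul [Decomposition ℳ] {A : AddSubgroup S} {k₀ : ℕ}
    (hfg : ∀ k ≤ k₀, (Submodule.span S (ℳ k : Set M)).FG)
    (hsimple : ∀ k ≥ k₀, ℳ (k + 1) ≤ grSMul A (ℳ k : Set M)) : Module.Finite S M := by
  set N := ⨆ k ∈ Finset.Iic k₀, Submodule.span S (ℳ k : Set M)
  have hlow {k : ℕ} (hk : k ≤ k₀) : (ℳ k : Set M) ⊆ N :=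
    Submodule.subset_span.trans <| le_biSup (fun k => Submodule.span S (ℳ k : Set M))
      (Finset.mem_Iic.2 hk)
  have hle (n : ℕ) : (ℳ n : Set M) ⊆ N := by
    induction n with
    | zero => exact hlow (Nat.zero_le k₀)
    | succ n ih =>
      by_cases hn : n + 1 ≤ k₀
      · exact hlow hn
      · exact (hsimple n (by omega)).trans (grSMul_le_toAddSubgroup ih)
  have hN : N = ⊤ := eq_top_iff.2 fun m _ =>
    Decomposition.inductionOn ℳ (zero_mem N) (fun m => hle _ m.2) (fun _ _ => add_mem) m
  exact ⟨hN ▸ Submodule.fg_biSup _ _ fun k hk => hfg k (Finset.mem_Iic.1 hk)⟩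

end Graded

/-- Technical Lemma: if the graded ring `S` is generated as a ring by `S₀` and `S₁`,
and each component `M_k` of the graded `S`-module `M` is a finitely generated
`S₀`-module, then `M` is finitely generated over `S` if and only if the grading
on `M` is simple, i.e. `S₁ • M_k = M_{k+1}` for all sufficiently large `k`. -/
theorem fg_iff_simple_grading
    {S : Type*} [CommRing S] (𝒜 : ℕ → AddSubgroup S) [GradedRing 𝒜]
    {M : Type*} [AddCommGroup M] [Module S M] (ℳ : ℕ → AddSubgroup M)
    [SetLike.GradedSMul 𝒜 ℳ] [DirectSum.Decomposition ℳ]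
    (hgen : Subring.closure ((𝒜 0 : Set S) ∪ (𝒜 1 : Set S)) = ⊤)
    (hcomp_fg : ∀ k : ℕ, ∃ T : Finset M, (T : Set M) ⊆ (ℳ k : Set M) ∧
      grSMul (𝒜 0) (T : Set M) = ℳ k) :
    Module.Finite S M ↔
      ∃ k₀ : ℕ, ∀ k ≥ k₀, grSMul (𝒜 1) (ℳ k : Set M) = ℳ (k + 1) := by
  constructor
  · intro _
    obtain ⟨k₀, hspan⟩ := Module.Finite.exists_span_graded_le_eq_top (S := S) (ℳ := ℳ)
    exact ⟨k₀, fun k hk => grSMul_one_eq_of_span_eq_top hgen hspan hk⟩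
  · rintro ⟨k₀, hsimple⟩
    refine Module.finite_of_le_grSMul (k₀ := k₀) (fun k _ => ?_) fun k hk => (hsimple k hk).ge
    obtain ⟨T, hT, hTgen⟩ := hcomp_fg k
    exact fg_span_of_grSMul_eq hT hTgen
end

section
/- Let S = ⊕_{k≥0} S_k be a commutative graded ring generated as a ring by S_0 and S_1, and let M = ⊕_{k≥0} M_k be a long graded S-module such that: each M_k is finitely generated as an S_0-module; S_1 is finitely generated as an S_0-module; and the S-grading on M is simple. Then there exists an S-submodule L of M that is not saturated and such that the quotient S-module M/L is finitely generated as a module over the subring S_0. -/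
open DirectSum Pointwise

section GrSMul

variable {S M : Type*} [CommRing S] [AddCommGroup M] [Module S M]

theorem grSMul_mono (A : AddSubgroup S) {T T' : Set M} (h : T ⊆ T') :
    grSMul A T ≤ grSMul A T' :=
  AddSubgroup.closure_mono fun _ ⟨a, ha, t, ht, hx⟩ => ⟨a, ha, t, h ht, hx⟩

theorem grSMul_le_span (A : AddSubgroup S) (T : Set M) :
    grSMul A T ≤ (Submodule.span S T).toAddSubgroup :=
  (AddSubgroup.closure_le _).2 fun _ ⟨a, _, _, ht, hx⟩ =>
    hx ▸ Submodule.smul_mem _ a (Submodule.subset_span ht)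

theorem grSMul_le_smul_top {A : AddSubgroup S} {I : Ideal S} (hA : (A : Set S) ⊆ I)
    (T : Set M) :
    grSMul A T ≤ (I • (⊤ : Submodule S M)).toAddSubgroup :=
  (AddSubgroup.closure_le _).2 fun _ ⟨_, ha, _, _, hx⟩ =>
    hx ▸ Submodule.smul_mem_smul (hA ha) Submodule.mem_top

theorem grSMul_image {M' : Type*} [AddCommGroup M'] [Module S M'] (A : AddSubgroup S)
    (f : M →ₗ[S] M') (T : Set M) :
    grSMul A (f '' T) = (grSMul A T).map f.toAddMonoidHom := by
  rw [grSMul, grSMul, AddMonoidHom.map_closure]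
  congr 1
  ext x
  simp only [Set.mem_ofPred_eq, Set.mem_image, LinearMap.toAddMonoidHom_coe]
  constructor
  · rintro ⟨a, ha, _, ⟨t, ht, rfl⟩, rfl⟩
    exact ⟨a • t, ⟨a, ha, t, ht, rfl⟩, map_smul f a t⟩
  · rintro ⟨_, ⟨a, ha, t, ht, rfl⟩, rfl⟩
    exact ⟨a, ha, f t, ⟨t, ht, rfl⟩, map_smul f a t⟩

end GrSMul

theorem exists_pow_smul_mem_of_forall_mem_span {S M : Type*} [CommRing S] [AddCommGroup M]
    [Module S M] {N : Submodule S M} {t : S} {U : Finset M}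
    (hU : ∀ u ∈ U, ∃ r : ℕ, t ^ r • u ∈ N) :
    ∃ R : ℕ, ∀ m ∈ Submodule.span S (U : Set M), t ^ R • m ∈ N := by
  classical
  choose! r hr using hU
  refine ⟨U.sup r, fun m hm => ?_⟩
  suffices Submodule.span S (U : Set M) ≤ N.comap (t ^ U.sup r • LinearMap.id) from this hm
  refine Submodule.span_le.2 fun u hu => ?_
  have hle : r u ≤ U.sup r := Finset.le_sup hu
  simp only [SetLike.mem_coe, Submodule.mem_comap, LinearMap.smul_apply, LinearMap.id_apply]
  rw [← Nat.sub_add_cancel hle, pow_add, mul_smul]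
  exact N.smul_mem _ (hr u hu)

def Submodule.IsSaturated {S M : Type*} [Semiring S] [AddCommGroup M] [Module S M]
    (N : Submodule S M) (ℳ : ℕ → AddSubgroup M) : Prop :=
  ∃ k₀ : ℕ, ∀ k ≥ k₀, (ℳ k : Set M) ⊆ (N : Set M)

theorem Submodule.not_isSaturated_bot {S M : Type*} [Semiring S] [AddCommGroup M] [Module S M]
    {ℳ : ℕ → AddSubgroup M} (hlong : ∀ k : ℕ, ∃ j ≥ k, ℳ j ≠ ⊥) :
    ¬ (⊥ : Submodule S M).IsSaturated ℳ := fun ⟨k, hk⟩ => by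
  obtain ⟨j, hj, hne⟩ := hlong k
  exact hne (eq_bot_iff.2 fun x hx => by simpa using hk j hj hx)

theorem isSaturated_smul_top_of_simple {S M : Type*} [CommRing S] [AddCommGroup M] [Module S M]
    {𝒜 : ℕ → AddSubgroup S} {ℳ : ℕ → AddSubgroup M} {I : Ideal S} (hI : (𝒜 1 : Set S) ⊆ I)
    {k₀ : ℕ} (hsimple : ∀ k ≥ k₀, grSMul (𝒜 1) (ℳ k : Set M) = ℳ (k + 1)) :
    (I • ⊤ : Submodule S M).IsSaturated ℳ := by
  refine ⟨k₀ + 1, fun k hk => ?_⟩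
  obtain ⟨k, rfl⟩ : ∃ k', k = k' + 1 := ⟨k - 1, by omega⟩
  rw [← hsimple k (by omega)]
  exact grSMul_le_smul_top hI _

section Graded

variable {S : Type*} [CommRing S] {𝒜 : ℕ → AddSubgroup S}
  {M : Type*} [AddCommGroup M] [Module S M] {ℳ : ℕ → AddSubgroup M}

section Decomposition

variable [DirectSum.Decomposition ℳ]

variable (ℳ) in
theorem exists_coe_decompose_eq_zero (x : M) : ∃ D, ∀ d ≥ D, (decompose ℳ x d : M) = 0 := by
  classical
  refine ⟨(decompose ℳ x).support.sup id + 1, fun d hd => ?_⟩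
  have hd : d ∉ (decompose ℳ x).support := fun h => by
    have := Finset.le_sup (f := id) h
    rw [id] at this
    omega
  simp [DFinsupp.notMem_support_iff.1 hd]

theorem Submodule.isHomogeneous_bot : (⊥ : Submodule S M).IsHomogeneous ℳ :=
  fun _ _ hx => by simp [(Submodule.mem_bot S).1 hx]

theorem Submodule.IsHomogeneous.sup {N N' : Submodule S M} (hN : N.IsHomogeneous ℳ)
    (hN' : N'.IsHomogeneous ℳ) : (N ⊔ N').IsHomogeneous ℳ := by
  intro d x hx
  obtain ⟨y, hy, z, hz, rfl⟩ := Submodule.mem_sup.1 hx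
  rw [decompose_add, DirectSum.add_apply, AddMemClass.coe_add]
  exact Submodule.add_mem_sup (hN d hy) (hN' d hz)

theorem exists_finset_grSMul_mkQ_eq_top (A : AddSubgroup S) {L : Submodule S M}
    (hfg : ∀ k, ∃ U : Finset M, ℳ k ≤ grSMul A (U : Set M)) {k₀ : ℕ}
    (hL : ∀ k ≥ k₀, ∀ x ∈ ℳ (k + 1), ∃ y ∈ ℳ k, x - y ∈ L) :
    ∃ Q : Finset (M ⧸ L), grSMul A (Q : Set (M ⧸ L)) = ⊤ := by
  classical
  choose U hU using hfg
  set Q := (Finset.range (k₀ + 1)).biUnion fun k => (U k).image L.mkQ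
  have hdeg : ∀ k, ∀ x ∈ ℳ k, L.mkQ x ∈ grSMul A (Q : Set (M ⧸ L)) := by
    intro k
    induction k using Nat.strong_induction_on with
    | _ k ih =>
      intro x hx
      rcases le_or_gt k k₀ with hk | hk
      · have hUQ : L.mkQ '' (U k : Set M) ⊆ Q := by
          rintro _ ⟨u, hu, rfl⟩
          simp only [Q, Finset.coe_biUnion, Finset.coe_image, Set.mem_iUnion]
          exact ⟨k, by simpa using Nat.lt_succ_of_le hk, u, hu, rfl⟩
        refine grSMul_mono A hUQ ?_
        rw [grSMul_image]
        exact ⟨x, hU k hx, rfl⟩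
      · obtain ⟨k, rfl⟩ := Nat.exists_eq_add_of_lt hk
        obtain ⟨y, hy, hxy⟩ := hL (k₀ + k) (by omega) x hx
        rw [show L.mkQ x = L.mkQ y from (Submodule.Quotient.eq L).2 hxy]
        exact ih _ (by omega) y hy
  refine ⟨Q, (AddSubgroup.eq_top_iff' _).2 fun z => ?_⟩
  obtain ⟨x, rfl⟩ := L.mkQ_surjective z
  induction x using DirectSum.Decomposition.inductionOn ℳ with
  | zero => simp
  | homogeneous m => exact hdeg _ m m.2
  | add x y hx hy => simpa using add_mem hx hy

end Decomposition

section GradedSMul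

variable [SetLike.GradedSMul 𝒜 ℳ] [DirectSum.Decomposition ℳ]

theorem coe_decompose_smul_add_of_mem {i : ℕ} {t : S} (ht : t ∈ 𝒜 i) (x : M) (d : ℕ) :
    (decompose ℳ (t • x) (d + i) : M) = t • (decompose ℳ x d : M) := by
  induction x using DirectSum.Decomposition.inductionOn ℳ with
  | zero => simp
  | @homogeneous j m =>
    have htm : t • (m : M) ∈ ℳ (j + i) := by
      simpa [add_comm] using SetLike.GradedSMul.smul_mem ht m.2
    by_cases hdj : d = j
    · subst hdj
      rw [decompose_of_mem_same ℳ htm, decompose_of_mem_same ℳ m.2]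
    · rw [decompose_of_mem_ne ℳ htm (by omega), decompose_of_mem_ne ℳ m.2 (Ne.symm hdj),
        smul_zero]
  | add x y hx hy =>
    simp only [smul_add, decompose_add, DirectSum.add_apply, AddMemClass.coe_add, hx, hy]

theorem coe_decompose_smul_of_lt {i d : ℕ} {t : S} (ht : t ∈ 𝒜 i) (x : M) (hd : d < i) :
    (decompose ℳ (t • x) d : M) = 0 := by
  induction x using DirectSum.Decomposition.inductionOn ℳ with
  | zero => simp
  | @homogeneous j m =>
    have htm : t • (m : M) ∈ ℳ (j + i) := by
      simpa [add_comm] using SetLike.GradedSMul.smul_mem ht m.2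
    exact decompose_of_mem_ne ℳ htm (by omega)
  | add x y hx hy =>
    simp only [smul_add, decompose_add, DirectSum.add_apply, AddMemClass.coe_add, hx, hy,
      add_zero]

theorem isHomogeneous_smul_top {i : ℕ} {t : S} (ht : t ∈ 𝒜 i) :
    (t • (⊤ : Submodule S M)).IsHomogeneous ℳ := by
  intro d x hx
  obtain ⟨y, -, rfl⟩ := (Submodule.mem_smul_pointwise_iff_exists _ _ _).1 hx
  rcases lt_or_ge d i with hd | hd
  · rw [coe_decompose_smul_of_lt ht y hd]
    exact zero_mem _
  · obtain ⟨d, rfl⟩ := Nat.exists_eq_add_of_le' hd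
    rw [coe_decompose_smul_add_of_mem ht]
    exact Submodule.smul_mem_pointwise_smul _ _ _ Submodule.mem_top

variable {N : Submodule S M} {t : S}

theorem exists_mem_sub_smul_mem (hN : N.IsHomogeneous ℳ) (ht : t ∈ 𝒜 1) {k : ℕ} {x : M}
    (hx : x ∈ ℳ (k + 1)) (hxN : x ∈ N ⊔ t • ⊤) : ∃ y ∈ ℳ k, x - t • y ∈ N := by
  obtain ⟨n, hn, _, hz, rfl⟩ := Submodule.mem_sup.1 hxN
  obtain ⟨z, -, rfl⟩ := (Submodule.mem_smul_pointwise_iff_exists _ _ _).1 hz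
  refine ⟨decompose ℳ z k, (decompose ℳ z k).2, ?_⟩
  have hcomp := decompose_of_mem_same ℳ hx
  rw [decompose_add, DirectSum.add_apply, AddMemClass.coe_add,
    coe_decompose_smul_add_of_mem ht] at hcomp
  rw [← hcomp, add_sub_cancel_right]
  exact hN _ hn

theorem exists_mem_sub_pow_smul_mem (hN : N.IsHomogeneous ℳ) (ht : t ∈ 𝒜 1) {k₀ k : ℕ}
    (hsat : ∀ j ≥ k₀, (ℳ j : Set M) ⊆ (N ⊔ t • ⊤ : Submodule S M)) (hk : k₀ ≤ k) (r : ℕ)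
    {x : M} (hx : x ∈ ℳ (k + r)) : ∃ y ∈ ℳ k, x - t ^ r • y ∈ N := by
  induction r generalizing x with
  | zero => exact ⟨x, hx, by simp⟩
  | succ r ih =>
    obtain ⟨y', hy', hxy'⟩ := exists_mem_sub_smul_mem hN ht hx (hsat _ (by omega) hx)
    obtain ⟨y, hy, hy'y⟩ := ih hy'
    refine ⟨y, hy, ?_⟩
    have hsplit : x - t ^ (r + 1) • y = (x - t • y') + t • (y' - t ^ r • y) := by
      rw [smul_sub, smul_smul, ← pow_succ']
      abel
    rw [hsplit]
    exact N.add_mem hxy' (N.smul_mem t hy'y)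

theorem coe_decompose_sub_one_smul_succ (ht : t ∈ 𝒜 1) (x : M) (d : ℕ) :
    (decompose ℳ ((t - 1) • x) (d + 1) : M) =
      t • decompose ℳ x d - decompose ℳ x (d + 1) := by
  rw [sub_smul, one_smul, decompose_sub, DirectSum.sub_apply, AddSubgroupClass.coe_sub,
    coe_decompose_smul_add_of_mem ht]

theorem coe_decompose_sub_one_smul_zero (ht : t ∈ 𝒜 1) (x : M) :
    (decompose ℳ ((t - 1) • x) 0 : M) = -decompose ℳ x 0 := by
  rw [sub_smul, one_smul, decompose_sub, DirectSum.sub_apply, AddSubgroupClass.coe_sub,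
    coe_decompose_smul_of_lt ht x one_pos, zero_sub]

theorem exists_pow_smul_mem_of_mem_sup_sub_one_smul_top (hN : N.IsHomogeneous ℳ)
    (ht : t ∈ 𝒜 1) {j : ℕ} (hj : 0 < j) {m : M} (hm : m ∈ ℳ j)
    (hmL : m ∈ N ⊔ (t - 1) • ⊤) : ∃ r : ℕ, t ^ r • m ∈ N := by
  obtain ⟨n, hn, _, hz, hnz⟩ := Submodule.mem_sup.1 hmL
  obtain ⟨x, -, rfl⟩ := (Submodule.mem_smul_pointwise_iff_exists _ _ _).1 hz
  set c : ℕ → M := fun d => decompose ℳ x d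
  have hcomp : ∀ d, (decompose ℳ ((t - 1) • x) d : M) - decompose ℳ m d ∈ N := fun d => by
    simpa [← hnz] using N.neg_mem (hN d hn)
  have hlow : ∀ d < j, c d ∈ N := by
    intro d hd
    induction d with
    | zero => simpa [coe_decompose_sub_one_smul_zero ht, decompose_of_mem_ne ℳ hm hj.ne']
        using hcomp 0
    | succ d ih =>
      have := hcomp (d + 1)
      rw [coe_decompose_sub_one_smul_succ ht, decompose_of_mem_ne ℳ hm (by omega),
        sub_zero] at this
      simpa [c] using N.sub_mem (N.smul_mem t (ih (by omega))) this
  have hhigh : ∀ r, c (j + r) + t ^ r • m ∈ N := by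
    intro r
    induction r with
    | zero =>
      obtain ⟨j, rfl⟩ : ∃ j', j = j' + 1 := ⟨j - 1, by omega⟩
      have := hcomp (j + 1)
      rw [coe_decompose_sub_one_smul_succ ht, decompose_of_mem_same ℳ hm] at this
      simpa [c, sub_sub] using N.sub_mem (N.smul_mem t (hlow j (by omega))) this
    | succ r ih =>
      have := hcomp (j + r + 1)
      rw [coe_decompose_sub_one_smul_succ ht, decompose_of_mem_ne ℳ hm (by omega),
        sub_zero] at this
      have hsplit : c (j + (r + 1)) + t ^ (r + 1) • m
          = t • (c (j + r) + t ^ r • m) - (t • c (j + r) - c (j + r + 1)) := by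
        rw [smul_add, smul_smul, ← pow_succ', ← add_assoc]
        abel
      rw [hsplit]
      exact N.sub_mem (N.smul_mem t ih) this
  obtain ⟨D, hD⟩ := exists_coe_decompose_eq_zero ℳ x
  exact ⟨D, by simpa [c, hD (j + D) (by omega)] using hhigh D⟩

theorem not_isSaturated_sup_sub_one_smul_top
    (hfg : ∀ k, ∃ U : Finset M,
      (U : Set M) ⊆ ℳ k ∧ (ℳ k : Set M) ⊆ Submodule.span S (U : Set M))
    (hN : N.IsHomogeneous ℳ) (hNs : ¬ N.IsSaturated ℳ) (ht : t ∈ 𝒜 1)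
    (htN : (N ⊔ t • ⊤).IsSaturated ℳ) : ¬ (N ⊔ (t - 1) • ⊤).IsSaturated ℳ := by
  rintro ⟨k₁, hk₁⟩
  obtain ⟨k₀, hk₀⟩ := htN
  set j₀ := k₀ + k₁ + 1
  obtain ⟨U, hUj, hspan⟩ := hfg j₀
  obtain ⟨R, hR⟩ := exists_pow_smul_mem_of_forall_mem_span fun u hu =>
    exists_pow_smul_mem_of_mem_sup_sub_one_smul_top hN ht (by omega) (hUj hu)
      (hk₁ j₀ (by omega) (hUj hu))
  refine hNs ⟨j₀ + R, fun j hj x hx => ?_⟩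
  obtain ⟨y, hy, hxy⟩ := exists_mem_sub_pow_smul_mem hN ht hk₀ (by omega : k₀ ≤ j₀) (j - j₀)
    (show x ∈ ℳ (j₀ + (j - j₀)) by rwa [Nat.add_sub_cancel' (by omega)])
  have hty : t ^ (j - j₀) • y ∈ N := by
    rw [show j - j₀ = (j - j₀ - R) + R by omega, pow_add, mul_smul]
    exact N.smul_mem _ (hR y (hspan hy))
  simpa using N.add_mem hxy hty

theorem exists_mem_sub_mem_sup_sub_one_smul_top (hN : N.IsHomogeneous ℳ) (ht : t ∈ 𝒜 1)
    {k : ℕ} {x : M} (hx : x ∈ ℳ (k + 1)) (hxN : x ∈ N ⊔ t • ⊤) :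
    ∃ y ∈ ℳ k, x - y ∈ N ⊔ (t - 1) • ⊤ := by
  obtain ⟨y, hy, hxy⟩ := exists_mem_sub_smul_mem hN ht hx hxN
  refine ⟨y, hy, ?_⟩
  rw [show x - y = (x - t • y) + (t - 1) • y by rw [sub_smul, one_smul]; abel]
  exact Submodule.add_mem_sup hxy
    (Submodule.smul_mem_pointwise_smul _ _ _ Submodule.mem_top)

theorem exists_isHomogeneous_not_isSaturated_sup_smul_top_isSaturated {T : Finset S}
    (hT : ∀ t ∈ T, t ∈ 𝒜 1) {N : Submodule S M} (hN : N.IsHomogeneous ℳ)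
    (hNs : ¬ N.IsSaturated ℳ) (hNT : (N ⊔ Ideal.span (T : Set S) • ⊤).IsSaturated ℳ) :
    ∃ t ∈ 𝒜 1, ∃ N' : Submodule S M,
      N'.IsHomogeneous ℳ ∧ ¬ N'.IsSaturated ℳ ∧ (N' ⊔ t • ⊤).IsSaturated ℳ := by
  classical
  induction T using Finset.induction_on generalizing N with
  | empty => simp_all
  | insert t T _ ih =>
    have ht : t ∈ 𝒜 1 := hT t (Finset.mem_insert_self t T)
    by_cases htN : (N ⊔ t • ⊤).IsSaturated ℳ
    · exact ⟨t, ht, N, hN, hNs, htN⟩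
    refine ih (fun s hs => hT s (Finset.mem_insert_of_mem hs))
      (hN.sup (isHomogeneous_smul_top ht)) htN ?_
    rwa [Finset.coe_insert, Ideal.span_insert, Submodule.sup_smul,
      Submodule.ideal_span_singleton_smul, ← sup_assoc] at hNT

end GradedSMul

end Graded

theorem exists_nonsaturated_with_fg_quotient_general
    {S : Type*} [CommRing S] (𝒜 : ℕ → AddSubgroup S)
    {M : Type*} [AddCommGroup M] [Module S M] (ℳ : ℕ → AddSubgroup M)
    [SetLike.GradedSMul 𝒜 ℳ] [DirectSum.Decomposition ℳ]
    (hcomp_fg : ∀ k : ℕ, ∃ T : Finset M, (T : Set M) ⊆ (ℳ k : Set M) ∧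
      grSMul (𝒜 0) (T : Set M) = ℳ k)
    (hS1_fg : ∃ T : Finset S, (T : Set S) ⊆ (𝒜 1 : Set S) ∧
      grSMul (𝒜 0) (T : Set S) = 𝒜 1)
    (hlong : ∀ k : ℕ, ∃ j ≥ k, ℳ j ≠ ⊥)
    (hsimple : ∃ k₀ : ℕ, ∀ k ≥ k₀, grSMul (𝒜 1) (ℳ k : Set M) = ℳ (k + 1)) :
    ∃ L : Submodule S M,
      ¬ (∃ k₀ : ℕ, ∀ k ≥ k₀, (ℳ k : Set M) ⊆ (L : Set M)) ∧
      ∃ T : Finset (M ⧸ L), grSMul (𝒜 0) (T : Set (M ⧸ L)) = ⊤ := by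
  obtain ⟨T, hT𝒜, hT⟩ := hS1_fg
  obtain ⟨k₀, hk₀⟩ := hsimple
  have hTsat : (⊥ ⊔ Ideal.span (T : Set S) • ⊤ : Submodule S M).IsSaturated ℳ := by
    rw [bot_sup_eq]
    exact isSaturated_smul_top_of_simple (hT ▸ grSMul_le_span (𝒜 0) (T : Set S)) hk₀
  obtain ⟨t, ht, N, hN, hNs, htN⟩ :=
    exists_isHomogeneous_not_isSaturated_sup_smul_top_isSaturated (fun t ht => hT𝒜 ht)
      Submodule.isHomogeneous_bot (Submodule.not_isSaturated_bot hlong) hTsat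
  refine ⟨N ⊔ (t - 1) • ⊤, ?_, ?_⟩
  · refine not_isSaturated_sup_sub_one_smul_top (fun k => ?_) hN hNs ht htN
    obtain ⟨U, hUk, hU⟩ := hcomp_fg k
    exact ⟨U, hUk, hU ▸ grSMul_le_span (𝒜 0) (U : Set M)⟩
  · obtain ⟨k₁, hk₁⟩ := htN
    have hfg (k : ℕ) : ∃ U : Finset M, ℳ k ≤ grSMul (𝒜 0) (U : Set M) :=
      (hcomp_fg k).imp fun _ hU => hU.2.ge
    exact exists_finset_grSMul_mkQ_eq_top (𝒜 0) hfg (k₀ := k₁) fun k hk x hx =>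
      exists_mem_sub_mem_sup_sub_one_smul_top hN ht hx (hk₁ _ (by omega) hx)

/-- Finiteness theorem (generalizing Cartier–Tate).  Let `S` be a commutative graded
ring generated as a ring by `S₀` and `S₁`, and let `M` be a *long* graded `S`-module
(components non-zero for arbitrarily large indices) such that each `M_k` is finitely
generated over `S₀`, `S₁` is finitely generated over `S₀`, and the grading on `M` is
simple.  Then there is an `S`-submodule `L` of `M` which is *not* saturated and such
that `M/L` is finitely generated as an `S₀`-module. -/
theorem exists_nonsaturated_with_fg_quotient
    {S : Type*} [CommRing S] (𝒜 : ℕ → AddSubgroup S) [GradedRing 𝒜]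
    {M : Type*} [AddCommGroup M] [Module S M] (ℳ : ℕ → AddSubgroup M)
    [SetLike.GradedSMul 𝒜 ℳ] [DirectSum.Decomposition ℳ]
    (hgen : Subring.closure ((𝒜 0 : Set S) ∪ (𝒜 1 : Set S)) = ⊤)
    (hcomp_fg : ∀ k : ℕ, ∃ T : Finset M, (T : Set M) ⊆ (ℳ k : Set M) ∧
      grSMul (𝒜 0) (T : Set M) = ℳ k)
    (hS1_fg : ∃ T : Finset S, (T : Set S) ⊆ (𝒜 1 : Set S) ∧
      grSMul (𝒜 0) (T : Set S) = 𝒜 1)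
    (hlong : ∀ k : ℕ, ∃ j ≥ k, ℳ j ≠ ⊥)
    (hsimple : ∃ k₀ : ℕ, ∀ k ≥ k₀, grSMul (𝒜 1) (ℳ k : Set M) = ℳ (k + 1)) :
    ∃ L : Submodule S M,
      ¬ (∃ k₀ : ℕ, ∀ k ≥ k₀, (ℳ k : Set M) ⊆ (L : Set M)) ∧
      ∃ T : Finset (M ⧸ L), grSMul (𝒜 0) (T : Set (M ⧸ L)) = ⊤ :=
  exists_nonsaturated_with_fg_quotient_general 𝒜 ℳ hcomp_fg hS1_fg hlong hsimple
end

section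
/- Let F be a field and S = F[X_0, X_1, ..., X_n] the polynomial ring graded by total degree. If J is a homogeneous ideal of S that is non-saturated (i.e., J does not contain all homogeneous polynomials of degree ≥ k for any k), then J has a non-trivial zero over an algebraic closure K of F: there exist elements x_0, x_1, ..., x_n of K, not all zero, such that f(x_0, x_1, ..., x_n) = 0 for every polynomial f in J. -/
/-!
If `J` had no common zero in `Kⁿ⁺¹` other than the origin, every coordinate function would
vanish on the zero locus of `J`, so by the Nullstellensatz (with points in the algebraically
closed extension `K`, so no base change of `J` to `K[X]` is needed) each `Xᵢ` lies in the
radical of `J`, i.e. `Xᵢ ^ Nᵢ ∈ J`. But every monomial of degree `> ∑ Nᵢ` is divisible by some `Xᵢ ^ Nᵢ`,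
so `J` would contain all homogeneous polynomials of large degree.
-/

namespace MvPolynomial

theorem monomial_mem_of_X_pow_mem {σ R : Type*} [CommSemiring R] {J : Ideal (MvPolynomial σ R)}
    {i : σ} {N : ℕ} (hX : X i ^ N ∈ J) {α : σ →₀ ℕ} (hα : N ≤ α i) (c : R) :
    monomial α c ∈ J := by
  rw [← tsub_add_cancel_of_le (Finsupp.single_le_iff.mpr hα), ← mul_one c, ← monomial_mul,
    ← X_pow_eq_monomial]
  exact J.mul_mem_left _ hX

theorem IsHomogeneous.mem_of_X_pow_mem {σ R : Type*} [CommSemiring R] [Fintype σ]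
    {J : Ideal (MvPolynomial σ R)} {N : σ → ℕ} (hX : ∀ i, X i ^ N i ∈ J)
    {f : MvPolynomial σ R} {k : ℕ} (hf : f.IsHomogeneous k) (hk : ∑ i, N i < k) : f ∈ J := by
  rw [f.as_sum]
  refine J.sum_mem fun α hα => ?_
  have hdeg : ∑ i, α i = k := by
    rw [← Finsupp.degree_eq_sum, Finsupp.degree_apply, hf.degree_eq_sum_deg_support hα]
  obtain ⟨i, -, hi⟩ := Finset.exists_lt_of_sum_lt (hk.trans_eq hdeg.symm)
  exact monomial_mem_of_X_pow_mem (hX i) hi.le _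

theorem X_mem_radical_of_zeroLocus_subset_zero {σ k K : Type*} [Field k] [Field K] [Algebra k K]
    [IsAlgClosed K] [Finite σ] {I : Ideal (MvPolynomial σ k)} (hI : zeroLocus K I ⊆ {0})
    (i : σ) : X i ∈ I.radical := by
  rw [← vanishingIdeal_zeroLocus_eq_radical (K := K)]
  intro x hx
  rw [hI hx]
  simp

end MvPolynomial

open MvPolynomial in
theorem nonsaturated_homogeneous_ideal_has_projective_zero_general
    (F : Type*) [Field F] (n : ℕ)
    (J : Ideal (MvPolynomial (Fin (n + 1)) F))
    (hnonsat : ¬ ∃ k₀ : ℕ, ∀ k ≥ k₀, ∀ f : MvPolynomial (Fin (n + 1)) F,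
      f.IsHomogeneous k → f ∈ J) :
    ∃ x : Fin (n + 1) → AlgebraicClosure F, x ≠ 0 ∧
      ∀ f ∈ J, MvPolynomial.aeval x f = 0 := by
  by_contra! hno_zero
  have hzero : zeroLocus (AlgebraicClosure F) J ⊆ {0} := fun x hx => by
    by_contra hx0
    obtain ⟨f, hfJ, hfx⟩ := hno_zero x hx0
    exact hfx (hx f hfJ)
  choose N hN using X_mem_radical_of_zeroLocus_subset_zero hzero
  exact hnonsat ⟨∑ i, N i + 1, fun k hk f hf => hf.mem_of_X_pow_mem hN (by omega)⟩

/-- Homogeneous Nullstellensatz: let `F` be a field and `S = F[X₀, …, Xₙ]` graded by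
total degree.  If `J` is a homogeneous ideal of `S` that is non-saturated (it does not
contain all homogeneous polynomials of degree `≥ k` for any `k`), then `J` has a
non-trivial zero over an algebraic closure `K` of `F`. -/
theorem nonsaturated_homogeneous_ideal_has_projective_zero
    (F : Type*) [Field F] (n : ℕ)
    (J : Ideal (MvPolynomial (Fin (n + 1)) F))
    (hhom : ∀ f ∈ J, ∀ k : ℕ, MvPolynomial.homogeneousComponent k f ∈ J)
    (hnonsat : ¬ ∃ k₀ : ℕ, ∀ k ≥ k₀, ∀ f : MvPolynomial (Fin (n + 1)) F,
      f.IsHomogeneous k → f ∈ J) :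
    ∃ x : Fin (n + 1) → AlgebraicClosure F, x ≠ 0 ∧
      ∀ f ∈ J, MvPolynomial.aeval x f = 0 :=
  nonsaturated_homogeneous_ideal_has_projective_zero_general F n J hnonsat
end

section
/- Let F be a field and S = F[X_0, X_1, ..., X_n] the polynomial ring graded by total degree. If J is a non-saturated homogeneous ideal of S, then there exists an ideal K of S containing J such that K is non-saturated and the quotient ring S/K is finite-dimensional as an F-vector space. -/
/-!
If `J` contains no power of the irrelevant ideal `𝔪 = (X₀, …, Xₙ)`, then `𝔪 ⊄ √J`. As the
polynomial ring is Jacobson, `√J` is the intersection of the maximal ideals containing `J`, so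
some maximal ideal `M ⊇ J` does not contain `𝔪`. Being prime, `M` cannot contain all forms of a
fixed large degree (these include a power of every variable), and `S ⧸ M` is a field finitely
generated over `F`, hence finite-dimensional by Zariski's lemma.
-/

open MvPolynomial

namespace MvPolynomial

variable {σ R : Type*} [CommSemiring R]

/-- Not the usual saturation `I = I : 𝔪^∞`: for finitely many variables this says `𝔪 ^ N ≤ I`
for some `N`. -/
def IsSaturated (I : Ideal (MvPolynomial σ R)) : Prop :=
  ∃ k₀ : ℕ, ∀ k ≥ k₀, ∀ f : MvPolynomial σ R, f.IsHomogeneous k → f ∈ I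

theorem IsHomogeneous.mem_pow_idealOfVars {f : MvPolynomial σ R} {k N : ℕ}
    (hf : f.IsHomogeneous k) (hN : N ≤ k) : f ∈ idealOfVars σ R ^ N := by
  rw [mem_pow_idealOfVars_iff]
  intro d hd
  rw [Finsupp.degree_eq_weight_one]
  exact hN.trans (hf (mem_support_iff.mp hd)).ge

theorem isSaturated_of_pow_idealOfVars_le {I : Ideal (MvPolynomial σ R)} {N : ℕ}
    (h : idealOfVars σ R ^ N ≤ I) : IsSaturated I :=
  ⟨N, fun _ hk _ hf => h (hf.mem_pow_idealOfVars hk)⟩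

theorem isSaturated_of_idealOfVars_le_radical [Finite σ] {I : Ideal (MvPolynomial σ R)}
    (h : idealOfVars σ R ≤ I.radical) : IsSaturated I :=
  have ⟨_, hN⟩ := Ideal.exists_pow_le_of_le_radical_of_fg h (idealOfVars_fg σ R)
  isSaturated_of_pow_idealOfVars_le hN

theorem IsSaturated.idealOfVars_le {P : Ideal (MvPolynomial σ R)} [P.IsPrime]
    (h : IsSaturated P) : idealOfVars σ R ≤ P := by
  obtain ⟨k₀, hk₀⟩ := h
  rw [Ideal.span_le, Set.range_subset_iff]
  exact fun i => Ideal.IsPrime.mem_of_pow_mem ‹_› k₀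
    (hk₀ k₀ le_rfl _ (isHomogeneous_X_pow i k₀))

end MvPolynomial

theorem Ideal.exists_isMaximal_not_le_of_not_le_radical {R : Type*} [CommRing R]
    [IsJacobsonRing R] {I J : Ideal R} (h : ¬ I ≤ J.radical) :
    ∃ M : Ideal R, M.IsMaximal ∧ J ≤ M ∧ ¬ I ≤ M := by
  by_contra! hM
  rw [J.radical_eq_jacobson] at h
  exact h (le_sInf fun M ⟨hJM, hMax⟩ => hM M hMax hJM)

theorem exists_nonsaturated_ideal_with_finite_quotient_general
    (F : Type*) [Field F] (n : ℕ)
    (J : Ideal (MvPolynomial (Fin (n + 1)) F))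
    (hnonsat : ¬ ∃ k₀ : ℕ, ∀ k ≥ k₀, ∀ f : MvPolynomial (Fin (n + 1)) F,
      f.IsHomogeneous k → f ∈ J) :
    ∃ K : Ideal (MvPolynomial (Fin (n + 1)) F), J ≤ K ∧
      (¬ ∃ k₀ : ℕ, ∀ k ≥ k₀, ∀ f : MvPolynomial (Fin (n + 1)) F,
        f.IsHomogeneous k → f ∈ K) ∧
      FiniteDimensional F (MvPolynomial (Fin (n + 1)) F ⧸ K) := by
  have hJ_vars : ¬ idealOfVars (Fin (n + 1)) F ≤ J.radical :=
    fun h => hnonsat (isSaturated_of_idealOfVars_le_radical h)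
  obtain ⟨M, hM, hJM, hM_vars⟩ := Ideal.exists_isMaximal_not_le_of_not_le_radical hJ_vars
  refine ⟨M, hJM, fun hsat => hM_vars (IsSaturated.idealOfVars_le hsat), ?_⟩
  let := Ideal.Quotient.field M
  exact finite_of_finite_type_of_isJacobsonRing F _

/-- Let `F` be a field and `S = F[X₀, …, Xₙ]` graded by total degree.  If `J` is a
non-saturated homogeneous ideal of `S` (it does not contain all homogeneous polynomials
of degree `≥ k` for any `k`), then there is an ideal `K ⊇ J` which is still
non-saturated and such that `S/K` is a finite-dimensional `F`-vector space. -/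
theorem exists_nonsaturated_ideal_with_finite_quotient
    (F : Type*) [Field F] (n : ℕ)
    (J : Ideal (MvPolynomial (Fin (n + 1)) F))
    (hhom : ∀ f ∈ J, ∀ k : ℕ, MvPolynomial.homogeneousComponent k f ∈ J)
    (hnonsat : ¬ ∃ k₀ : ℕ, ∀ k ≥ k₀, ∀ f : MvPolynomial (Fin (n + 1)) F,
      f.IsHomogeneous k → f ∈ J) :
    ∃ K : Ideal (MvPolynomial (Fin (n + 1)) F), J ≤ K ∧
      (¬ ∃ k₀ : ℕ, ∀ k ≥ k₀, ∀ f : MvPolynomial (Fin (n + 1)) F,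
        f.IsHomogeneous k → f ∈ K) ∧
      FiniteDimensional F (MvPolynomial (Fin (n + 1)) F ⧸ K) :=
  exists_nonsaturated_ideal_with_finite_quotient_general F n J hnonsat
end

section
/- Let S = ⊕_{k≥0} S_k be a commutative graded ring, P = ⊕_{k≥0} P_k a graded S-module, and x ∈ S_1. Suppose the component P_j is finitely generated as an S_0-module and P_j is contained in the submodule (1 − x)·P. Then there exists a natural number n such that xⁿ·P_j = 0. -/
/-! Write `v = (1 - x) • u` with `v` homogeneous of degree `j`. Since `x` has degree one,
comparing components gives `u_d = 0` for `d < j` and `u_{j+m} = x^m • v`; as `u` has only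
finitely many nonzero components, some `x^m` kills `v`. Finite generation of `P_j` over `S₀`
makes the exponent uniform. -/

open DirectSum

section GradedSMul

variable {S : Type*} [CommRing S] {𝒜 : ℕ → AddSubgroup S}
    {P : Type*} [AddCommGroup P] [Module S P] (ℳ : ℕ → AddSubgroup P)
    [SetLike.GradedSMul 𝒜 ℳ] [DirectSum.Decomposition ℳ]

theorem coe_decompose_smul_of_mem {a : S} {i : ℕ} (ha : a ∈ 𝒜 i) (w : P) (n : ℕ) :
    (decompose ℳ (a • w) n : P) = if i ≤ n then a • (decompose ℳ w (n - i) : P) else 0 := by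
  induction w using DirectSum.Decomposition.inductionOn ℳ with
  | zero => simp
  | @homogeneous k m =>
    have hmem : a • (m : P) ∈ ℳ (i + k) := SetLike.GradedSMul.smul_mem ha m.2
    rw [decompose_of_mem ℳ hmem, decompose_coe]
    by_cases hn : i + k = n
    · subst hn
      simp only [coe_of_apply, le_add_iff_nonneg_right, zero_le, if_true, Nat.add_sub_cancel_left,
        of_eq_same]
    · rw [coe_of_apply, if_neg hn]
      split_ifs with hi
      · rw [coe_of_apply, if_neg (show k ≠ n - i by omega)]
        simp
      · rfl
  | add m m' hm hm' =>
    simp only [smul_add, decompose_add, DirectSum.add_apply, AddMemClass.coe_add, hm, hm']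
    split_ifs <;> simp

theorem coe_decompose_eq_of_one_sub_smul_eq {x : S} (hx : x ∈ 𝒜 1) {u v : P} {j : ℕ}
    (hv : v ∈ ℳ j) (huv : (1 - x) • u = v) (n : ℕ) :
    (decompose ℳ u n : P) = if j ≤ n then x ^ (n - j) • v else 0 := by
  have hu : u = v + x • u := by rw [← huv, sub_smul, one_smul, sub_add_cancel]
  have hrec (n : ℕ) :
      (decompose ℳ u n : P) = (decompose ℳ v n : P) + (decompose ℳ (x • u) n : P) := by
    conv_lhs => rw [hu]
    rw [decompose_add, DirectSum.add_apply, AddMemClass.coe_add]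
  have hvn (n : ℕ) : (decompose ℳ v n : P) = if j = n then v else 0 := by
    rw [decompose_of_mem ℳ hv, coe_of_apply]
    split_ifs <;> rfl
  induction n with
  | zero =>
    rw [hrec, coe_decompose_smul_of_mem ℳ hx, hvn]
    rcases Nat.eq_zero_or_pos j with rfl | hj
    · simp
    · simp [hj.ne', hj.not_ge]
  | succ n ih =>
    rw [hrec, coe_decompose_smul_of_mem ℳ hx, Nat.add_sub_cancel, ih, hvn]
    rcases lt_trichotomy j (n + 1) with hj | rfl | hj
    · simp [hj.ne, hj.le, Nat.le_of_lt_succ hj, smul_smul, ← pow_succ', Nat.sub_add_comm]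
    · simp
    · simp [hj.ne', hj.not_ge, (Nat.lt_of_succ_lt hj).not_ge]

theorem exists_pow_smul_eq_zero_of_mem_of_one_sub_smul_eq {x : S} (hx : x ∈ 𝒜 1) {u v : P}
    {j : ℕ} (hv : v ∈ ℳ j) (huv : (1 - x) • u = v) : ∃ n : ℕ, x ^ n • v = 0 := by
  classical
  obtain ⟨N, hN⟩ := (decompose ℳ u).support.exists_nat_subset_range
  have hjN : decompose ℳ u (j + N) = 0 :=
    DFinsupp.notMem_support_iff.mp fun h => by simpa using hN h
  refine ⟨N, ?_⟩
  simpa [hjN] using (coe_decompose_eq_of_one_sub_smul_eq ℳ hx hv huv (j + N)).symm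

end GradedSMul

section PowSMul

variable {R M : Type*} [Monoid R] [AddMonoid M] [DistribMulAction R M]

theorem Finset.exists_pow_smul_eq_zero {x : R} {T : Finset M}
    (h : ∀ t ∈ T, ∃ n : ℕ, x ^ n • t = 0) :
    ∃ n : ℕ, ∀ t ∈ T, x ^ n • t = 0 := by
  choose! f hf using h
  refine ⟨T.sup f, fun t ht => ?_⟩
  rw [← Nat.sub_add_cancel (Finset.le_sup ht), pow_add, mul_smul, hf t ht, smul_zero]

end PowSMul

theorem exists_pow_smul_eq_zero_of_grSMul {S M : Type*} [CommRing S] [AddCommGroup M]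
    [Module S M]
    (A : AddSubgroup S) {x : S} {T : Finset M} (h : ∀ t ∈ T, ∃ n : ℕ, x ^ n • t = 0) :
    ∃ n : ℕ, ∀ v ∈ grSMul A (T : Set M), x ^ n • v = 0 := by
  obtain ⟨n, hn⟩ := Finset.exists_pow_smul_eq_zero h
  refine ⟨n, fun v hv => ?_⟩
  refine (AddSubgroup.closure_le (DistribSMul.toAddMonoidHom M (x ^ n)).ker).mpr ?_ hv
  rintro _ ⟨a, -, t, ht, rfl⟩
  show x ^ n • a • t = 0
  rw [smul_comm, hn t ht, smul_zero]

theorem pow_smul_eq_zero_of_component_sub_one_sub_smul_general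
    {S : Type*} [CommRing S] (𝒜 : ℕ → AddSubgroup S)
    {P : Type*} [AddCommGroup P] [Module S P] (ℳ : ℕ → AddSubgroup P)
    [SetLike.GradedSMul 𝒜 ℳ] [DirectSum.Decomposition ℳ]
    (x : S) (hx : x ∈ 𝒜 1) (j : ℕ)
    (hfg : ∃ T : Finset P, (T : Set P) ⊆ (ℳ j : Set P) ∧
      grSMul (𝒜 0) (T : Set P) = ℳ j)
    (hsub : ∀ v ∈ ℳ j, ∃ u : P, v = (1 - x) • u) :
    ∃ n : ℕ, ∀ v ∈ ℳ j, x ^ n • v = 0 := by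
  obtain ⟨T, hTj, hgen⟩ := hfg
  have hT : ∀ t ∈ T, ∃ n : ℕ, x ^ n • t = 0 := fun t ht =>
    have ⟨_, hu⟩ := hsub t (hTj ht)
    exists_pow_smul_eq_zero_of_mem_of_one_sub_smul_eq ℳ hx (hTj ht) hu.symm
  rw [← hgen]
  exact exists_pow_smul_eq_zero_of_grSMul (𝒜 0) hT

/-- Let `P` be a graded `S`-module and `x ∈ S₁`.  If the component `P_j` is finitely
generated as an `S₀`-module and `P_j ⊆ (1 - x) • P`, then `xⁿ • P_j = 0` for some
natural number `n`. -/
theorem pow_smul_eq_zero_of_component_sub_one_sub_smul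
    {S : Type*} [CommRing S] (𝒜 : ℕ → AddSubgroup S) [GradedRing 𝒜]
    {P : Type*} [AddCommGroup P] [Module S P] (ℳ : ℕ → AddSubgroup P)
    [SetLike.GradedSMul 𝒜 ℳ] [DirectSum.Decomposition ℳ]
    (x : S) (hx : x ∈ 𝒜 1) (j : ℕ)
    (hfg : ∃ T : Finset P, (T : Set P) ⊆ (ℳ j : Set P) ∧
      grSMul (𝒜 0) (T : Set P) = ℳ j)
    (hsub : ∀ v ∈ ℳ j, ∃ u : P, v = (1 - x) • u) :
    ∃ n : ℕ, ∀ v ∈ ℳ j, x ^ n • v = 0 :=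
  pow_smul_eq_zero_of_component_sub_one_sub_smul_general 𝒜 ℳ x hx j hfg hsub
end
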